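/- arXiv:math/0402201 — 6 statements merged into one kernel-verified Lean document; each statement's English description precedes it below -/
import Mathlib

section
/- The function f₁(t) = −tan(arctan(f₀''(t))/n) is the unique continuous real-valued function g on an interval containing 0 with g(0) = 0 satisfying Im((1 + i·g(t))ⁿ · (1 + i·f₀''(t))) = 0 for all t, given f₀''(0) = 0. -/
lemma polar (x : ℝ) : (1 + Complex.I * x) = (Real.sqrt (1+x^2) : ℂ) * Complex.exp (Real.arctan x * Complex.I) := by
  have hs : Real.sqrt (1+x^2) ≠ 0 := by positivity
  have h1 : Complex.exp ((Real.arctan x : ℂ) * Complex.I)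
      = ((Real.cos (Real.arctan x) : ℝ) : ℂ) + ((Real.sin (Real.arctan x) : ℝ) : ℂ) * Complex.I := by
    rw [Complex.exp_mul_I, Complex.ofReal_cos, Complex.ofReal_sin]
  rw [h1, Real.cos_arctan, Real.sin_arctan]
  push_cast
  have hs' : (Real.sqrt (1+x^2) : ℂ) ≠ 0 := by exact_mod_cast hs
  field_simp

lemma keyim (n : ℕ) (x y : ℝ) :
    (((1 : ℂ) + Complex.I * x) ^ n * (1 + Complex.I * y)).im
      = Real.sqrt (1+x^2) ^ n * Real.sqrt (1+y^2)
        * Real.sin (n * Real.arctan x + Real.arctan y) := by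
  rw [polar x, polar y, mul_pow, ← Complex.exp_nat_mul]
  have h1 : (((Real.sqrt (1+x^2) : ℂ)) ^ n * Complex.exp ((n : ℂ) * ((Real.arctan x : ℂ) * Complex.I)))
      * ((Real.sqrt (1+y^2) : ℂ) * Complex.exp ((Real.arctan y : ℂ) * Complex.I))
      = ((Real.sqrt (1+x^2) ^ n * Real.sqrt (1+y^2) : ℝ) : ℂ)
        * Complex.exp (((n * Real.arctan x + Real.arctan y : ℝ) : ℂ) * Complex.I) := by
    calc _ = ((Real.sqrt (1+x^2) : ℂ) ^ n * (Real.sqrt (1+y^2) : ℂ))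
          * (Complex.exp ((n : ℂ) * ((Real.arctan x : ℂ) * Complex.I))
            * Complex.exp ((Real.arctan y : ℂ) * Complex.I)) := by ring
    _ = _ := by
        rw [← Complex.exp_add]
        push_cast
        ring_nf
  rw [h1]
  have h2 : Complex.exp (((n * Real.arctan x + Real.arctan y : ℝ) : ℂ) * Complex.I)
      = ((Real.cos (n * Real.arctan x + Real.arctan y) : ℝ) : ℂ)
        + ((Real.sin (n * Real.arctan x + Real.arctan y) : ℝ) : ℂ) * Complex.I := by
    rw [Complex.exp_mul_I, Complex.ofReal_cos, Complex.ofReal_sin]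
  rw [h2]
  simp only [Complex.add_im, Complex.mul_im, Complex.ofReal_re, Complex.ofReal_im,
    Complex.I_re, Complex.I_im]
  ring

/-- f₁(t) = −tan(arctan(f₀''(t))/n) is the unique continuous
function g with g(0) = 0 on a connected open neighborhood of 0 satisfying
Im((1 + i·g(t))ⁿ·(1 + i·f₀''(t))) = 0 pointwise, given f₀''(0) = 0. -/
theorem stmt2 (n : ℕ) (hn : 1 ≤ n) (f0 : ℝ → ℝ) (s : Set ℝ)
    (hs : IsOpen s) (hconn : IsConnected s) (h0 : (0 : ℝ) ∈ s)
    (han : AnalyticOn ℝ f0 s) (hb0 : deriv (deriv f0) 0 = 0)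
    (g : ℝ → ℝ) (hg : ContinuousOn g s) (hg0 : g 0 = 0)
    (heq : ∀ t ∈ s,
      (((1 : ℂ) + Complex.I * g t) ^ n * (1 + Complex.I * (deriv (deriv f0) t))).im = 0) :
    ∀ t ∈ s, g t = -Real.tan (Real.arctan (deriv (deriv f0) t) / n) := by
  set b : ℝ → ℝ := fun t => deriv (deriv f0) t with hbdef
  have hbc : ContinuousOn b s := by
    have h1 : AnalyticOnNhd ℝ f0 s := (hs.analyticOn_iff_analyticOnNhd).mp han
    exact (h1.deriv.deriv).continuousOn
  set φ : ℝ → ℝ := fun t => n * Real.arctan (g t) + Real.arctan (b t) with hφdef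
  have hφc : ContinuousOn φ s := by
    apply ContinuousOn.add
    · exact continuousOn_const.mul (Real.continuous_arctan.comp_continuousOn hg)
    · exact Real.continuous_arctan.comp_continuousOn hbc
  have hsin : ∀ t ∈ s, Real.sin (φ t) = 0 := by
    intro t ht
    have h := heq t ht
    rw [keyim] at h
    have h1 : (0:ℝ) < Real.sqrt (1 + (g t)^2) ^ n * Real.sqrt (1 + (b t)^2) := by positivity
    exact (mul_eq_zero.mp h).resolve_left (ne_of_gt h1)
  have hφ0 : φ 0 = 0 := by
    have : b 0 = 0 := hb0
    simp [hφdef, hg0, this]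
  -- φ is identically 0 on s
  have hzero : ∀ t ∈ s, φ t = 0 := by
    intro t ht
    by_contra hne
    have hoc : (φ '' s).OrdConnected := (hconn.isPreconnected.image φ hφc).ordConnected
    have h0K : (0:ℝ) ∈ φ '' s := ⟨0, h0, hφ0⟩
    have htK : φ t ∈ φ '' s := ⟨t, ht, rfl⟩
    obtain ⟨k, hk⟩ := Real.sin_eq_zero_iff.mp (hsin t ht)
    have hpi := Real.pi_pos
    rcases lt_or_gt_of_ne hne with hlt | hgt
    · -- φ t < 0 : then φ t ≤ -π, so -π/2 ∈ [φ t, 0]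
      have hk1 : (k:ℝ) ≤ -1 := by
        have h1 : (k:ℝ) * Real.pi < 0 := by rw [hk]; exact hlt
        have h2 : (k:ℝ) < 0 := by nlinarith
        have h3 : k < 0 := by exact_mod_cast h2
        have h4 : k ≤ -1 := by omega
        exact_mod_cast h4
      have hle : φ t ≤ -(Real.pi/2) := by rw [← hk]; nlinarith
      have hmem : -(Real.pi/2) ∈ Set.Icc (φ t) 0 := ⟨hle, by linarith⟩
      obtain ⟨u, hu, hφu⟩ := hoc.out htK h0K hmem
      have := hsin u hu
      rw [hφu] at this
      simp [Real.sin_neg, Real.sin_pi_div_two] at this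
    · have hk1 : (1:ℝ) ≤ (k:ℝ) := by
        have h1 : (0:ℝ) < (k:ℝ) * Real.pi := by rw [hk]; exact hgt
        have h2 : (0:ℝ) < (k:ℝ) := by nlinarith
        have h3 : 0 < k := by exact_mod_cast h2
        have h4 : 1 ≤ k := by omega
        exact_mod_cast h4
      have hle : Real.pi/2 ≤ φ t := by rw [← hk]; nlinarith
      have hmem : Real.pi/2 ∈ Set.Icc (0:ℝ) (φ t) := ⟨by linarith, hle⟩
      obtain ⟨u, hu, hφu⟩ := hoc.out h0K htK hmem
      have := hsin u hu
      rw [hφu] at this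
      simp [Real.sin_pi_div_two] at this
  intro t ht
  have hz := hzero t ht
  have hnpos : (0:ℝ) < n := by exact_mod_cast hn
  have harc : Real.arctan (g t) = -(Real.arctan (b t) / n) := by
    have : (n:ℝ) * Real.arctan (g t) + Real.arctan (b t) = 0 := hz
    field_simp
    linarith
  calc g t = Real.tan (Real.arctan (g t)) := (Real.tan_arctan _).symm
  _ = -Real.tan (Real.arctan (b t) / n) := by rw [harc, Real.tan_neg]
end

section
/- Let n ≥ 1 and define Φ : ℂ × ℂ × S^{n−1} → ℂ^{n+1} by Φ(w, ζ, u) = (w, ζu₁, …, ζuₙ). Then the pullback under Φ of Υ = Im(dz₀ ∧ dz₁ ∧ ⋯ ∧ dzₙ) equals (1/n)·Im(dw ∧ d(ζⁿ)) ∧ Ω, where Ω = ∑_{k=1}^{n} (−1)^{k−1} u_k du₁ ∧ ⋯ ∧ \widehat{du_k} ∧ ⋯ ∧ duₙ is the standard volume form of S^{n−1}. -/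
open Finset

lemma stmt5_val_succAbove {n : ℕ} (p : Fin (n+1)) (i : Fin n) :
    ((p.succAbove i : Fin (n+1)) : ℕ) = if (i:ℕ) < (p:ℕ) then (i:ℕ) else (i:ℕ)+1 := by
  rcases lt_or_ge (i.castSucc) p with h | h
  · rw [Fin.succAbove_of_castSucc_lt _ _ h, Fin.coe_castSucc,
      if_pos (by simpa [Fin.lt_def] using h)]
  · rw [Fin.succAbove_of_le_castSucc _ _ h, Fin.val_succ,
      if_neg (not_lt.2 (by simpa [Fin.le_def] using h))]

lemma stmt5_key {n : ℕ} (p' i : Fin (n+1)) (h : (p':ℕ) ≤ (i:ℕ)) (s : Fin n) :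
    (p'.castSucc).succAbove (i.succAbove s) = (i.succ).succAbove (p'.succAbove s) := by
  have h1 := stmt5_val_succAbove (p'.castSucc) (i.succAbove s)
  have h2 := stmt5_val_succAbove ((i.succ)) (p'.succAbove s)
  have h3 := stmt5_val_succAbove i s
  have h4 := stmt5_val_succAbove p' s
  apply Fin.ext
  rw [h1, h2]
  simp only [Fin.coe_castSucc, Fin.val_succ] at *
  rw [h3] at h1 ⊢
  rw [h4] at h2 ⊢
  split_ifs at * <;> omega


lemma stmt5_T1 (m : ℕ) (ζ : ℂ) (u : Fin (m+1) → ℝ) (hu : ∑ j, u j ^ 2 = 1)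
    (α β : Fin (m+2) → ℂ) (v : Fin (m+2) → Fin (m+1) → ℝ)
    (hv : ∀ k, ∑ j, u j * v k j = 0) :
    Matrix.det (Matrix.of fun k l : Fin (m+2) =>
        Fin.cases (motive := fun _ => ℂ) (α k) (fun j => β k * (u j : ℂ) + ζ * (v k j : ℂ)) l)
    = ∑ j : Fin (m+1), (u j : ℂ) * ζ ^ m *
        Matrix.det (Matrix.of fun l k : Fin (m+2) =>
          Fin.cases (motive := fun _ => ℂ) (α k)
            (fun j' => if j' = j then β k else (v k j' : ℂ)) l) := by
  classical
  set f := (Matrix.detRowAlternating : (Fin (m+2) → ℂ) [⋀^Fin (m+2)]→ₗ[ℂ] ℂ) with hf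
  set a : Fin (m+2) → Fin (m+2) → ℂ :=
    Fin.cases (motive := fun _ => Fin (m+2) → ℂ) α (fun j k => (u j : ℂ) * β k) with ha
  set b : Fin (m+2) → Fin (m+2) → ℂ :=
    Fin.cases (motive := fun _ => Fin (m+2) → ℂ) 0 (fun j k => ζ * (v k j : ℂ)) with hb
  set c : Finset (Fin (m+2)) → Fin (m+2) → ℂ := fun s l =>
    if l ∈ s then Fin.cases (motive := fun _ => ℂ) 1 (fun j => (u j : ℂ)) l
    else Fin.cases (motive := fun _ => ℂ) 1 (fun _ => ζ) l with hc
  set r : Finset (Fin (m+2)) → Fin (m+2) → Fin (m+2) → ℂ := fun s l =>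
    if l ∈ s then Fin.cases (motive := fun _ => Fin (m+2) → ℂ) α (fun _ => β) l
    else Fin.cases (motive := fun _ => Fin (m+2) → ℂ) 0 (fun j k => (v k j : ℂ)) l with hr
  have h1 : Matrix.det (Matrix.of fun k l : Fin (m+2) =>
      Fin.cases (motive := fun _ => ℂ) (α k) (fun j => β k * (u j : ℂ) + ζ * (v k j : ℂ)) l)
      = f (a + b) := by
    rw [← Matrix.det_transpose]
    congr 1
    ext l k
    induction l using Fin.cases <;> simp [ha, hb, Matrix.transpose] <;> ring
  have hpiece : ∀ s : Finset (Fin (m+2)), s.piecewise a b = fun l => c s l • r s l := by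
    intro s
    funext l
    by_cases hls : l ∈ s <;>
      induction l using Fin.cases <;>
        (simp [Finset.piecewise, hls, ha, hb, hc, hr, Pi.smul_apply, smul_eq_mul]; try funext k) <;>
        (try simp [Pi.smul_apply, smul_eq_mul]) <;> (try ring)
  have h2 : f (a + b) = ∑ s : Finset (Fin (m+2)), (∏ l, c s l) * f (r s) := by
    rw [show f (a + b) = f.toMultilinearMap (a + b) from rfl,
      f.toMultilinearMap.map_add_univ a b]
    refine Finset.sum_congr rfl fun s _ => ?_
    rw [show f.toMultilinearMap (s.piecewise a b)
        = f.toMultilinearMap (fun l => c s l • r s l) by rw [hpiece s],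
      f.toMultilinearMap.map_smul_univ]
    simp [smul_eq_mul]
  have huex : ∃ j, u j ≠ 0 := by
    by_contra h
    push_neg at h
    simp [h] at hu
  have hvanish : ∀ s : Finset (Fin (m+2)),
      s ∉ Finset.image (fun j : Fin (m+1) => ({0, j.succ} : Finset (Fin (m+2)))) Finset.univ →
      f (r s) = 0 := by
    intro s hs
    by_cases h0 : (0 : Fin (m+2)) ∈ s
    · rcases Nat.lt_trichotomy (s.erase 0).card 1 with hcard | hcard | hcard
      · -- s = {0}
        have hse : s.erase 0 = ∅ := Finset.card_eq_zero.mp (by omega)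
        have hs0 : s = {0} := by
          have := Finset.insert_erase h0
          rw [hse] at this
          simpa using this.symm
        apply f.map_linearDependent
        rw [Fintype.not_linearIndependent_iff]
        refine ⟨Fin.cases (motive := fun _ => ℂ) 0 (fun j => (u j : ℂ)), ?_, ?_⟩
        · rw [Fin.sum_univ_succ]
          simp only [Fin.cases_zero, Fin.cases_succ, zero_smul, zero_add]
          funext k
          simp only [Finset.sum_apply, Pi.zero_apply, Pi.smul_apply, smul_eq_mul]
          have hvk : ((∑ j, u j * v k j : ℝ) : ℂ) = 0 := by rw [hv k]; norm_num
          push_cast at hvk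
          rw [← hvk]
          refine Finset.sum_congr rfl fun x _ => ?_
          have hxs : x.succ ∉ s := by
            rw [hs0]
            simp [Fin.succ_ne_zero]
          simp [hr, hxs]
        · obtain ⟨j, hj⟩ := huex
          exact ⟨j.succ, by simp [hj]⟩
      · -- card 1 : s = {0, succ j}, contradiction
        obtain ⟨x, hx⟩ := Finset.card_eq_one.mp hcard
        have hxs : x ∈ s.erase 0 := hx ▸ Finset.mem_singleton_self x
        have hx0 : x ≠ 0 := (Finset.mem_erase.mp hxs).1
        obtain ⟨j, hj⟩ := Fin.exists_succ_eq_of_ne_zero hx0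
        refine absurd (Finset.mem_image.mpr ⟨j, Finset.mem_univ j, ?_⟩) hs
        show ({0, j.succ} : Finset (Fin (m+2))) = s
        rw [hj, ← Finset.insert_erase h0, hx]
      · -- two β rows
        obtain ⟨x, hxmem, y, hymem, hxy⟩ := Finset.one_lt_card.mp hcard
        have hx := Finset.mem_erase.mp hxmem
        have hy := Finset.mem_erase.mp hymem
        obtain ⟨jx, hjx⟩ := Fin.exists_succ_eq_of_ne_zero hx.1
        obtain ⟨jy, hjy⟩ := Fin.exists_succ_eq_of_ne_zero hy.1
        refine f.map_eq_zero_of_eq _ (i := x) (j := y) ?_ hxy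
        rw [← hjx, ← hjy]
        have h1 : jx.succ ∈ s := hjx ▸ hx.2
        have h2 : jy.succ ∈ s := hjy ▸ hy.2
        simp [hr, h1, h2]
    · refine f.toMultilinearMap.map_coord_zero 0 ?_
      simp [hr, h0]
  -- restrict the sum to the image and evaluate
  have hrestrict : ∑ s : Finset (Fin (m+2)), (∏ l, c s l) * f (r s)
      = ∑ j : Fin (m+1), (∏ l, c ({0, j.succ}) l) * f (r ({0, j.succ})) := by
    have hinj : ∀ x ∈ (Finset.univ : Finset (Fin (m+1))), ∀ y ∈ Finset.univ,
        ({0, x.succ} : Finset (Fin (m+2))) = {0, y.succ} → x = y := by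
      intro x _ y _ hxy
      have hmem : x.succ ∈ ({0, y.succ} : Finset (Fin (m+2))) := by rw [← hxy]; simp
      simpa [Fin.succ_ne_zero, Fin.succ_inj] using hmem
    have himg := Finset.sum_image (s := Finset.univ)
      (f := fun s : Finset (Fin (m+2)) => (∏ l, c s l) * f (r s))
      (g := fun j : Fin (m+1) => ({0, j.succ} : Finset (Fin (m+2)))) hinj
    rw [← himg]
    refine (Finset.sum_subset (Finset.subset_univ _) fun s _ hs => ?_).symm
    rw [hvanish s hs, mul_zero]
  rw [h1, h2, hrestrict]
  refine Finset.sum_congr rfl fun j _ => ?_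
  -- compute the product of coefficients
  have hprod : (∏ l, c ({0, j.succ}) l) = (u j : ℂ) * ζ ^ m := by
    rw [Fin.prod_univ_succ]
    have hc0 : c ({0, j.succ}) 0 = 1 := by simp [hc]
    have hcs : ∀ j' : Fin (m+1), c ({0, j.succ}) j'.succ
        = if j' = j then (u j : ℂ) else ζ := by
      intro j'
      by_cases hjj : j' = j
      · subst hjj; simp [hc]
      · simp [hc, hjj, Fin.succ_ne_zero, Fin.succ_inj]
    rw [hc0, one_mul]
    calc (∏ j' : Fin (m+1), c ({0, j.succ}) j'.succ)
        = ∏ j' : Fin (m+1), (if j' = j then (u j : ℂ) else ζ) :=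
          Finset.prod_congr rfl fun j' _ => hcs j'
      _ = (u j : ℂ) * ζ ^ m := by
          rw [← Finset.mul_prod_erase Finset.univ _ (Finset.mem_univ j)]
          simp only [if_pos rfl]
          congr 1
          rw [Finset.prod_congr rfl (fun x hx => if_neg (Finset.mem_erase.mp hx).1),
            Finset.prod_const, Finset.card_erase_of_mem (Finset.mem_univ j),
            Finset.card_univ, Fintype.card_fin]
          norm_num
  rw [hprod]
  congr 1
  -- identify the remaining determinant
  show f (r ({0, j.succ})) = _
  congr 1
  funext l k
  induction l using Fin.cases with
  | zero => simp [hr]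
  | succ j' =>
      by_cases hjj : j' = j
      · subst hjj; simp [hr]
      · simp [hr, hjj, Fin.succ_ne_zero, Fin.succ_inj]


lemma stmt5_T2 (m : ℕ) (α β : Fin (m+2) → ℂ) (v : Fin (m+2) → Fin (m+1) → ℝ)
    (j : Fin (m+1)) :
    Matrix.det (Matrix.of fun l k : Fin (m+2) =>
        Fin.cases (motive := fun _ => ℂ) (α k)
          (fun j' => if j' = j then β k else (v k j' : ℂ)) l)
    = ∑ p : Fin (m+2), ∑ i : Fin (m+1),
        (-1 : ℂ) ^ ((p : ℕ) + (j : ℕ) + (i : ℕ)) * α p * β (p.succAbove i) *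
        ((Matrix.det (Matrix.of fun s t : Fin m =>
            v (p.succAbove (i.succAbove s)) (j.succAbove t)) : ℝ) : ℂ) := by
  rw [Matrix.det_succ_row_zero]
  refine Finset.sum_congr rfl fun p _ => ?_
  have hB : ((Matrix.of fun l k : Fin (m+2) =>
      Fin.cases (motive := fun _ => ℂ) (α k)
        (fun j' => if j' = j then β k else (v k j' : ℂ)) l).submatrix Fin.succ p.succAbove)
      = Matrix.of (fun s' k' : Fin (m+1) =>
          if s' = j then β (p.succAbove k') else (v (p.succAbove k') s' : ℂ)) := by
    ext s' k'
    simp [Matrix.submatrix_apply]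
  rw [hB, Matrix.det_succ_row _ j, Finset.mul_sum]
  refine Finset.sum_congr rfl fun i _ => ?_
  have hC : ((Matrix.of fun s' k' : Fin (m+1) =>
      if s' = j then β (p.succAbove k') else (v (p.succAbove k') s' : ℂ)).submatrix
        j.succAbove i.succAbove)
      = Matrix.transpose (RingHom.mapMatrix (Complex.ofRealHom)
          (Matrix.of (fun (s t : Fin m) =>
            v (p.succAbove (i.succAbove s)) (j.succAbove t)))) := by
    ext s t
    simp [Matrix.submatrix_apply, Fin.succAbove_ne j s]
  rw [hC, Matrix.det_transpose, ← RingHom.map_det]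
  simp only [Matrix.of_apply, Fin.cases_zero, if_pos rfl, RingHom.coe_coe,
    Complex.coe_algebraMap]
  simp only [Complex.ofRealHom_eq_coe]
  push_cast [pow_add]
  ring


lemma stmt5_sym {n : ℕ} (K : Fin n → Fin n → ℝ) (hd : ∀ p, K p p = 0) :
    ∑ p : Fin n, ∑ q : Fin n, (if p < q then K p q + K q p else 0)
    = ∑ p : Fin n, ∑ q : Fin n, K p q := by
  have hsplit : ∀ p q : Fin n,
      (if p < q then K p q + K q p else 0)
      = (if p < q then K p q else 0) + (if p < q then K q p else 0) := by
    intro p q; split_ifs <;> simp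
  simp_rw [hsplit, Finset.sum_add_distrib]
  have hswap : (∑ p : Fin n, ∑ q : Fin n, if p < q then K q p else 0)
      = ∑ p : Fin n, ∑ q : Fin n, if q < p then K p q else 0 := by
    rw [Finset.sum_comm]
  rw [hswap, ← Finset.sum_add_distrib]
  simp_rw [← Finset.sum_add_distrib]
  refine Finset.sum_congr rfl fun p _ => Finset.sum_congr rfl fun q _ => ?_
  rcases lt_trichotomy p q with h | h | h
  · rw [if_pos h, if_neg (asymm h), add_zero]
  · subst h; simp [hd]
  · rw [if_neg (asymm h), if_pos h, zero_add]

lemma stmt5_A (m : ℕ) (ζ : ℂ) (u : Fin (m+1) → ℝ) (hu : ∑ j, u j ^ 2 = 1)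
    (α β : Fin (m+2) → ℂ) (v : Fin (m+2) → Fin (m+1) → ℝ)
    (hv : ∀ k, ∑ j, u j * v k j = 0) :
    (Matrix.det (Matrix.of fun k l : Fin (m+2) =>
        Fin.cases (motive := fun _ => ℂ) (α k) (fun j => β k * (u j : ℂ) + ζ * (v k j : ℂ)) l)).im
    = ∑ p : Fin (m+2), ∑ i : Fin (m+1),
        (-1 : ℝ) ^ ((p : ℕ) + (i : ℕ)) * (ζ ^ m * (α p * β (p.succAbove i))).im *
        Matrix.det (Matrix.of (Fin.cons u
          (fun s : Fin m => v (p.succAbove (i.succAbove s))))) := by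
  have hdet_cons : ∀ (p : Fin (m+2)) (i : Fin (m+1)),
      Matrix.det (Matrix.of (Fin.cons u (fun s : Fin m => v (p.succAbove (i.succAbove s)))))
      = ∑ j : Fin (m+1), (-1:ℝ)^(j:ℕ) * u j *
          Matrix.det (Matrix.of fun s t : Fin m =>
            v (p.succAbove (i.succAbove s)) (j.succAbove t)) := by
    intro p i
    rw [Matrix.det_succ_row_zero]
    refine Finset.sum_congr rfl fun j _ => ?_
    have hsub : (Matrix.of (Fin.cons u fun s : Fin m =>
        v (p.succAbove (i.succAbove s)))).submatrix Fin.succ j.succAbove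
        = Matrix.of fun s t : Fin m => v (p.succAbove (i.succAbove s)) (j.succAbove t) := by
      ext s t
      simp [Matrix.submatrix_apply]
    rw [hsub]
    simp
  rw [stmt5_T1 m ζ u hu α β v hv]
  simp_rw [stmt5_T2 m α β v]
  rw [Complex.im_sum]
  have hterm : ∀ j : Fin (m+1),
      ((u j : ℂ) * ζ ^ m * ∑ p : Fin (m+2), ∑ i : Fin (m+1),
        (-1 : ℂ) ^ ((p : ℕ) + (j : ℕ) + (i : ℕ)) * α p * β (p.succAbove i) *
        ((Matrix.det (Matrix.of fun s t : Fin m =>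
            v (p.succAbove (i.succAbove s)) (j.succAbove t)) : ℝ) : ℂ)).im
      = ∑ p : Fin (m+2), ∑ i : Fin (m+1),
          (-1:ℝ) ^ ((p : ℕ) + (i : ℕ)) * (ζ ^ m * (α p * β (p.succAbove i))).im *
          ((-1:ℝ)^(j:ℕ) * u j *
            Matrix.det (Matrix.of fun s t : Fin m =>
              v (p.succAbove (i.succAbove s)) (j.succAbove t))) := by
    intro j
    rw [Finset.mul_sum, Complex.im_sum]
    refine Finset.sum_congr rfl fun p _ => ?_
    rw [Finset.mul_sum, Complex.im_sum]
    refine Finset.sum_congr rfl fun i _ => ?_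
    have hre : (u j : ℂ) * ζ ^ m *
        ((-1 : ℂ) ^ ((p : ℕ) + (j : ℕ) + (i : ℕ)) * α p * β (p.succAbove i) *
        ((Matrix.det (Matrix.of fun s t : Fin m =>
            v (p.succAbove (i.succAbove s)) (j.succAbove t)) : ℝ) : ℂ))
        = ((((-1:ℝ) ^ ((p : ℕ) + (j : ℕ) + (i : ℕ)) * u j *
            Matrix.det (Matrix.of fun s t : Fin m =>
              v (p.succAbove (i.succAbove s)) (j.succAbove t))) : ℝ) : ℂ)
          * (ζ ^ m * (α p * β (p.succAbove i))) := by
      push_cast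
      ring
    rw [hre, Complex.im_ofReal_mul]
    rw [pow_add, pow_add]
    ring
  rw [Finset.sum_congr rfl fun j _ => hterm j]
  rw [Finset.sum_comm]
  refine Finset.sum_congr rfl fun p _ => ?_
  rw [Finset.sum_comm]
  refine Finset.sum_congr rfl fun i _ => ?_
  rw [hdet_cons p i, Finset.mul_sum]

/-- n = m+1 ≥ 1: the pullback under Φ(w,ζ,u) = (w, ζu₁,…,ζuₙ) of
Υ = Im(dz₀∧⋯∧dzₙ) equals (1/n)·Im(dw∧d(ζⁿ))∧Ω, where Ω is the volume form of
S^{n−1} (given by Ω(w₁,…,w_{n−1}) = det(u,w₁,…,w_{n−1})).  Expressed on n+1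
tangent vectors Xₖ = (αₖ,βₖ,vₖ) at (w,ζ,u) (so |u| = 1 and u·vₖ = 0):
Im(det(dΦX₀,…,dΦXₙ)) equals the shuffle-sum expansion of the wedge product
(1/n)·Im(dw∧d(ζⁿ))∧Ω evaluated on X₀,…,Xₙ, where dw∧d(ζⁿ) has value
nζ^{n−1}(αₚβ_q − α_qβₚ) on (Xₚ,X_q). -/

theorem stmt5 (m : ℕ) (w ζ : ℂ) (u : Fin (m+1) → ℝ) (hu : ∑ j, u j ^ 2 = 1)
    (α β : Fin (m+2) → ℂ) (v : Fin (m+2) → Fin (m+1) → ℝ)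
    (hv : ∀ k, ∑ j, u j * v k j = 0) :
    (Matrix.det (Matrix.of fun k l : Fin (m+2) =>
        Fin.cases (motive := fun _ => ℂ) (α k) (fun j => β k * (u j : ℂ) + ζ * (v k j : ℂ)) l)).im
    = (1 / ((m : ℝ) + 1)) * ∑ p : Fin (m+2), ∑ q : Fin (m+2),
        if h : p < q then
          (-1 : ℝ) ^ ((p : ℕ) + (q : ℕ) + 1)
          * ((((m : ℂ) + 1) * ζ ^ m * (α p * β q - α q * β p)).im)
          * Matrix.det (Matrix.of (Fin.cons u (fun i : Fin m =>
              v (q.succAbove ((⟨(p : ℕ), by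
                  have h2 : (p : ℕ) < (q : ℕ) := h
                  omega⟩ : Fin (m+1)).succAbove i)))))
        else 0 := by
  classical
  rw [stmt5_A m ζ u hu α β v hv]
  set K : Fin (m+2) → Fin (m+2) → ℝ := fun p q =>
    if h : (p:ℕ) < (q:ℕ) then
      (-1:ℝ)^((p:ℕ)+(q:ℕ)+1) * (ζ^m * (α p * β q)).im *
        Matrix.det (Matrix.of (Fin.cons u (fun i : Fin m =>
          v (q.succAbove ((⟨(p:ℕ), lt_of_lt_of_le h (Nat.lt_succ_iff.mp q.isLt)⟩
            : Fin (m+1)).succAbove i)))))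
    else if h' : (q:ℕ) < (p:ℕ) then
      (-1:ℝ)^((p:ℕ)+(q:ℕ)) * (ζ^m * (α p * β q)).im *
        Matrix.det (Matrix.of (Fin.cons u (fun i : Fin m =>
          v (p.succAbove ((⟨(q:ℕ), lt_of_lt_of_le h' (Nat.lt_succ_iff.mp p.isLt)⟩
            : Fin (m+1)).succAbove i)))))
    else 0 with hK
  have hKlt : ∀ p q : Fin (m+2), ∀ h : (p:ℕ) < (q:ℕ), K p q =
      (-1:ℝ)^((p:ℕ)+(q:ℕ)+1) * (ζ^m * (α p * β q)).im *
        Matrix.det (Matrix.of (Fin.cons u (fun i : Fin m =>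
          v (q.succAbove ((⟨(p:ℕ), lt_of_lt_of_le h (Nat.lt_succ_iff.mp q.isLt)⟩
            : Fin (m+1)).succAbove i))))) := by
    intro p q h
    rw [hK]
    exact dif_pos h
  have hKgt : ∀ p q : Fin (m+2), ∀ h : (q:ℕ) < (p:ℕ), K p q =
      (-1:ℝ)^((p:ℕ)+(q:ℕ)) * (ζ^m * (α p * β q)).im *
        Matrix.det (Matrix.of (Fin.cons u (fun i : Fin m =>
          v (p.succAbove ((⟨(q:ℕ), lt_of_lt_of_le h (Nat.lt_succ_iff.mp p.isLt)⟩
            : Fin (m+1)).succAbove i))))) := by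
    intro p q h
    rw [hK]
    simp only []
    rw [dif_neg (by omega), dif_pos h]
  have hdiag : ∀ p, K p p = 0 := by
    intro p
    rw [hK]
    simp
  -- Step A : the double sum from stmt5_A equals ∑∑ K
  have hA : (∑ p : Fin (m+2), ∑ i : Fin (m+1),
      (-1:ℝ)^((p:ℕ)+(i:ℕ)) * (ζ^m * (α p * β (p.succAbove i))).im *
      Matrix.det (Matrix.of (Fin.cons u (fun s : Fin m => v (p.succAbove (i.succAbove s))))))
      = ∑ p : Fin (m+2), ∑ q : Fin (m+2), K p q := by
    refine Finset.sum_congr rfl fun p _ => ?_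
    rw [Fin.sum_univ_succAbove (fun q => K p q) p, hdiag p, zero_add]
    refine Finset.sum_congr rfl fun i _ => ?_
    rcases lt_or_ge ((i:ℕ)) ((p:ℕ)) with hlt | hge
    · have hq : p.succAbove i = i.castSucc :=
        Fin.succAbove_of_castSucc_lt _ _ (by simpa [Fin.lt_def] using hlt)
      rw [hq, hKgt p i.castSucc (by simpa using hlt)]
      have hfin : (⟨((i.castSucc : Fin (m+2)):ℕ),
          lt_of_lt_of_le (by simpa using hlt) (Nat.lt_succ_iff.mp p.isLt)⟩ : Fin (m+1)) = i := by
        apply Fin.ext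
        simp
      rw [hfin]
      try simp
    · have hq : p.succAbove i = i.succ :=
        Fin.succAbove_of_le_castSucc _ _ (by simpa [Fin.le_def] using hge)
      have h2 : (p:ℕ) < ((i.succ : Fin (m+2)):ℕ) := by
        simp only [Fin.val_succ]
        omega
      rw [hq, hKlt p i.succ h2]
      have hrows : (fun s : Fin m =>
          v ((i.succ).succAbove ((⟨(p:ℕ),
              lt_of_lt_of_le h2 (Nat.lt_succ_iff.mp (i.succ).isLt)⟩
              : Fin (m+1)).succAbove s)))
          = fun s : Fin m => v (p.succAbove (i.succAbove s)) := by
      -- via stmt5_key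
        funext s
        congr 1
        rw [← stmt5_key (⟨(p:ℕ), lt_of_lt_of_le h2 (Nat.lt_succ_iff.mp (i.succ).isLt)⟩
          : Fin (m+1)) i (by simpa using hge) s]
        have hcast : ((⟨(p:ℕ), lt_of_lt_of_le h2 (Nat.lt_succ_iff.mp (i.succ).isLt)⟩
            : Fin (m+1)).castSucc) = p := by
          apply Fin.ext
          simp
        rw [hcast]
      rw [hrows]
      have hsgn : (-1:ℝ)^((p:ℕ)+((i.succ : Fin (m+2)):ℕ)+1) = (-1:ℝ)^((p:ℕ)+(i:ℕ)) := by
        rw [show (p:ℕ)+((i.succ : Fin (m+2)):ℕ)+1 = ((p:ℕ)+(i:ℕ))+2 by simp; omega, pow_add]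
        norm_num
      rw [hsgn]
  rw [hA]
  -- Step B : rewrite the RHS
  have hB : ∀ p q : Fin (m+2),
      (if h : p < q then
          (-1 : ℝ) ^ ((p : ℕ) + (q : ℕ) + 1)
          * ((((m : ℂ) + 1) * ζ ^ m * (α p * β q - α q * β p)).im)
          * Matrix.det (Matrix.of (Fin.cons u (fun i : Fin m =>
              v (q.succAbove ((⟨(p : ℕ), by
                  have h2 : (p : ℕ) < (q : ℕ) := h
                  omega⟩ : Fin (m+1)).succAbove i)))))
        else 0)
      = ((m:ℝ)+1) * (if p < q then K p q + K q p else 0) := by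
    intro p q
    by_cases h : p < q
    · rw [dif_pos h, if_pos h]
      have hval : (p:ℕ) < (q:ℕ) := h
      rw [hKlt p q hval, hKgt q p hval]
      have him : (((m : ℂ) + 1) * ζ ^ m * (α p * β q - α q * β p)).im
          = ((m:ℝ)+1) * ((ζ^m * (α p * β q)).im - (ζ^m * (α q * β p)).im) := by
        have : ((m : ℂ) + 1) * ζ ^ m * (α p * β q - α q * β p)
            = ((((m:ℝ)+1) : ℝ) : ℂ) * (ζ^m * (α p * β q) - ζ^m * (α q * β p)) := by
          push_cast
          ring
        rw [this, Complex.im_ofReal_mul, Complex.sub_im]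
      rw [him]
      have hdets : Matrix.det (Matrix.of (Fin.cons u (fun i : Fin m =>
            v (q.succAbove ((⟨(p : ℕ), by
                have h2 : (p : ℕ) < (q : ℕ) := h
                omega⟩ : Fin (m+1)).succAbove i)))))
          = Matrix.det (Matrix.of (Fin.cons u (fun i : Fin m =>
            v (q.succAbove ((⟨(p:ℕ), lt_of_lt_of_le hval (Nat.lt_succ_iff.mp q.isLt)⟩
              : Fin (m+1)).succAbove i))))) := rfl
      rw [hdets]
      rw [pow_succ]
      ring
    · rw [dif_neg h, if_neg h, mul_zero]
  simp_rw [hB]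
  have hm : ((m:ℝ)+1) ≠ 0 := by positivity
  rw [← stmt5_sym K hdiag]
  simp_rw [← Finset.mul_sum]
  rw [← mul_assoc, one_div, inv_mul_cancel₀ hm, one_mul]
end

section
/- For ψ, ψ' ∈ ℝ, the planes P_ψ and P_{ψ'} (as real subspaces of ℂ^{n+1}) are equal if and only if ψ − ψ' is an integer multiple of π. -/
/-- The SO(n)-invariant special Lagrangian (n+1)-plane P_ψ ⊂ ℂ^{n+1}: the real
span of (e^{−inψ},0,…,0) and the vectors e^{iψ}eⱼ, j = 1,…,n. -/
noncomputable def Pplane (n : ℕ) (ψ : ℝ) : Submodule ℝ (Fin (n+1) → ℂ) :=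
  Submodule.span ℝ (Set.range (fun k : Fin (n+1) => fun l : Fin (n+1) =>
    if l = k then
      (if k = 0 then Complex.exp (-(n * ψ) * Complex.I) else Complex.exp (ψ * Complex.I))
    else 0))

lemma aux_exp (a b : ℝ) (m : ℤ) (h : a - b = m * Real.pi) :
    Complex.exp (a * Complex.I) = ((-1 : ℝ) ^ m : ℝ) • Complex.exp (b * Complex.I) := by
  have ha : (a : ℂ) = b + m * Real.pi := by
    have : a = b + m * Real.pi := by linarith
    push_cast [this]; ring
  rw [ha, add_mul, Complex.exp_add, mul_comm]
  have : ((m : ℂ) * Real.pi) * Complex.I = m * (Real.pi * Complex.I) := by ring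
  rw [this, Complex.exp_int_mul, Complex.exp_pi_mul_I, Complex.real_smul]
  push_cast
  ring

lemma Pplane_le (n : ℕ) (ψ ψ' : ℝ) (k : ℤ) (h : ψ - ψ' = k * Real.pi) :
    Pplane n ψ ≤ Pplane n ψ' := by
  rw [Pplane, Submodule.span_le]
  rintro _ ⟨j, rfl⟩
  beta_reduce
  simp only [SetLike.mem_coe]
  by_cases hj : j = 0
  · subst hj
    have hex : Complex.exp (-((n:ℂ) * ψ) * Complex.I)
        = ((-1 : ℝ) ^ (-(n * k)) : ℝ) • Complex.exp (-((n:ℂ) * ψ') * Complex.I) := by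
      have h1 : (-((n:ℂ) * ψ)) = ((-(n * ψ) : ℝ) : ℂ) := by push_cast; ring
      have h2 : (-((n:ℂ) * ψ')) = ((-(n * ψ') : ℝ) : ℂ) := by push_cast; ring
      rw [h1, h2]
      exact aux_exp _ _ (-(n*k)) (by push_cast; nlinarith [h])
    have heq : (fun l : Fin (n+1) =>
        if l = 0 then
          (if (0 : Fin (n+1)) = 0 then Complex.exp (-(n * ψ) * Complex.I)
           else Complex.exp (ψ * Complex.I)) else 0)
        = ((-1 : ℝ) ^ (-(n * k : ℤ)) : ℝ) • (fun l : Fin (n+1) =>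
        if l = 0 then
          (if (0 : Fin (n+1)) = 0 then Complex.exp (-(n * ψ') * Complex.I)
           else Complex.exp (ψ' * Complex.I)) else 0) := by
      funext l
      simp only [Pi.smul_apply]
      by_cases hl : l = 0
      · simp only [hl, if_pos rfl]
        exact hex
      · simp [hl]
    rw [heq]
    exact Submodule.smul_mem _ _ (Submodule.subset_span ⟨0, rfl⟩)
  · have hex : Complex.exp ((ψ:ℂ) * Complex.I)
        = ((-1 : ℝ) ^ k : ℝ) • Complex.exp ((ψ':ℂ) * Complex.I) := aux_exp _ _ k h
    have heq : (fun l : Fin (n+1) =>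
        if l = j then
          (if j = 0 then Complex.exp (-(n * ψ) * Complex.I)
           else Complex.exp (ψ * Complex.I)) else 0)
        = ((-1 : ℝ) ^ k : ℝ) • (fun l : Fin (n+1) =>
        if l = j then
          (if j = 0 then Complex.exp (-(n * ψ') * Complex.I)
           else Complex.exp (ψ' * Complex.I)) else 0) := by
      funext l
      simp only [Pi.smul_apply]
      by_cases hl : l = j
      · simp only [hl, if_pos rfl, if_neg hj]
        exact hex
      · simp [hl]
    rw [heq]
    exact Submodule.smul_mem _ _ (Submodule.subset_span ⟨j, rfl⟩)

/-- P_ψ = P_{ψ'} iff ψ − ψ' ∈ πℤ. -/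
theorem stmt7 (n : ℕ) (hn : 1 ≤ n) (ψ ψ' : ℝ) :
    Pplane n ψ = Pplane n ψ' ↔ ∃ k : ℤ, ψ - ψ' = k * Real.pi := by
  constructor
  · intro h
    set i1 : Fin (n+1) := ⟨1, by omega⟩ with hi1
    have hi1ne : i1 ≠ 0 := by
      simp [hi1, Fin.ext_iff]
    have hle : Pplane n ψ' ≤ Submodule.comap
        (LinearMap.proj (R := ℝ) (φ := fun _ : Fin (n+1) => ℂ) i1)
        (Submodule.span ℝ {Complex.exp ((ψ':ℂ) * Complex.I)}) := by
      rw [Pplane, Submodule.span_le]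
      rintro _ ⟨j, rfl⟩
      simp only [SetLike.mem_coe, Submodule.mem_comap, LinearMap.proj_apply]
      by_cases hj : i1 = j
      · subst hj
        simp only [if_pos rfl, if_neg hi1ne]
        exact Submodule.mem_span_singleton_self _
      · simp only [if_neg hj]
        exact Submodule.zero_mem _
    have hv : (fun l : Fin (n+1) =>
        if l = i1 then
          (if i1 = 0 then Complex.exp (-(n * ψ) * Complex.I)
           else Complex.exp (ψ * Complex.I)) else 0) ∈ Pplane n ψ' := by
      rw [← h]
      exact Submodule.subset_span ⟨i1, rfl⟩
    have hmem := hle hv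
    simp only [Submodule.mem_comap, LinearMap.proj_apply, if_pos rfl, if_true, if_neg hi1ne] at hmem
    rw [Submodule.mem_span_singleton] at hmem
    obtain ⟨r, hr⟩ := hmem
    have h1 : Complex.exp ((↑(ψ - ψ') : ℂ) * Complex.I) = (r : ℂ) := by
      have hsub : ((↑(ψ - ψ') : ℂ)) = (ψ : ℂ) - ψ' := by push_cast; ring
      rw [hsub, sub_mul, Complex.exp_sub, ← hr, Complex.real_smul,
        mul_div_assoc, div_self (Complex.exp_ne_zero _), mul_one]
    have hsin : Real.sin (ψ - ψ') = 0 := by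
      have h2 := congrArg Complex.im h1
      rwa [Complex.exp_ofReal_mul_I_im, Complex.ofReal_im] at h2
    rw [Real.sin_eq_zero_iff] at hsin
    obtain ⟨m, hm⟩ := hsin
    exact ⟨m, hm.symm⟩
  · rintro ⟨k, hk⟩
    exact le_antisymm (Pplane_le n ψ ψ' k hk)
      (Pplane_le n ψ' ψ (-k) (by push_cast; linarith))
end

section
/- For n ≥ 2 and 0 ≤ j < k < n, the intersection of the two planes λ^j⋆P_ψ and λ^k⋆P_ψ equals P_ψ ∩ (ℂ × {0}), i.e. the projections of the n planes λ^j⋆P_ψ to the last n coordinates intersect pairwise only at the origin. -/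
/-- for 0 ≤ j < k < n, the projections of λ^j⋆P_ψ and λ^k⋆P_ψ to
the last n coordinates, i.e. the real n-planes λ^j e^{iψ}·ℝⁿ and λ^k e^{iψ}·ℝⁿ
in ℂⁿ (λ = e^{iπ/n}), intersect only in 0. -/
theorem stmt9 (n j k : ℕ) (hn : 2 ≤ n) (hjk : j < k) (hkn : k < n) (ψ : ℝ)
    (z : Fin n → ℂ) (x y : Fin n → ℝ)
    (hx : ∀ l, z l = (Complex.exp (Real.pi * Complex.I / n)) ^ j *
      Complex.exp (ψ * Complex.I) * (x l : ℂ))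
    (hy : ∀ l, z l = (Complex.exp (Real.pi * Complex.I / n)) ^ k *
      Complex.exp (ψ * Complex.I) * (y l : ℂ)) :
    z = 0 := by
  have hn0 : (0:ℝ) < n := by positivity
  have hθpos : 0 < Real.pi * (k - j) / n := by
    have h0 : (j:ℝ) < k := by exact_mod_cast hjk
    have : (0:ℝ) < (k:ℝ) - j := by linarith
    positivity
  have hθlt : Real.pi * (k - j) / n < Real.pi := by
    rw [div_lt_iff₀ hn0]
    have hkj : ((k:ℝ) - j) < n := by
      have h1 : (k:ℝ) < n := by exact_mod_cast hkn
      have h2 : (0:ℝ) ≤ j := by positivity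
      linarith
    nlinarith [Real.pi_pos]
  have hsin : Real.sin (Real.pi * (k - j) / n) ≠ 0 := by
    exact ne_of_gt (Real.sin_pos_of_pos_of_lt_pi hθpos hθlt)
  funext l
  have h1 := (hx l).symm.trans (hy l)
  -- cancel exp(ψ I) and exp(πI/n)^j
  have hne1 : Complex.exp (ψ * Complex.I) ≠ 0 := Complex.exp_ne_zero _
  have hne2 : (Complex.exp (Real.pi * Complex.I / n)) ^ j ≠ 0 :=
    pow_ne_zero _ (Complex.exp_ne_zero _)
  have hk : (Complex.exp (Real.pi * Complex.I / n)) ^ k =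
      (Complex.exp (Real.pi * Complex.I / n)) ^ j *
      (Complex.exp (Real.pi * Complex.I / n)) ^ (k - j) := by
    rw [← pow_add, Nat.add_sub_cancel' hjk.le]
  rw [hk] at h1
  have h2 : (x l : ℂ) = (Complex.exp (Real.pi * Complex.I / n)) ^ (k - j) * (y l : ℂ) := by
    apply mul_left_cancel₀ (mul_ne_zero hne2 hne1)
    linear_combination h1
  have h3 : (Complex.exp (Real.pi * Complex.I / n)) ^ (k - j) =
      Complex.exp (((Real.pi * (k - j) / n : ℝ)) * Complex.I) := by
    rw [← Complex.exp_nat_mul]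
    congr 1
    push_cast [Nat.cast_sub hjk.le]
    ring
  rw [h3] at h2
  have him := congrArg Complex.im h2
  simp only [Complex.mul_im, Complex.ofReal_re, Complex.ofReal_im,
    Complex.exp_ofReal_mul_I_im, Complex.exp_ofReal_mul_I_re,
    mul_zero, add_zero, zero_add] at him
  have hy0 : y l = 0 := by
    rcases mul_eq_zero.mp him.symm with h | h
    · exact absurd h hsin
    · exact h
  rw [hy l, hy0]; simp
end

section
/- For n ≥ 1 and the map C(w, ζ) = (w, e^{iπ/n}ζ) on M₀ = ℂ × ℂ*, the pullbacks satisfy C*(ω₁) = conj(ω₂) and C*(ω₂) = conj(ω₁), where ω₁ = dw + i(ζ̄^{n−1}/|ζ|^{n−1})dζ̄ and ω₂ = dw̄ + i(ζ^{n−1}/|ζ|^{n−1})dζ. -/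
/-! `e = exp(iπ/n)` satisfies `e ^ n = -1`, hence `|e| = 1`. Rotating `ζ` by `e` therefore keeps
`|ζ|` and multiplies `ζ^{n-1} dζ` by `e ^ n = -1` (likewise for the conjugates), which is exactly
the sign produced by conjugating the factor `i`. -/

open Complex ComplexConjugate

theorem exp_pi_mul_I_div_pow_self {n : ℕ} (hn : n ≠ 0) :
    exp (Real.pi * I / n) ^ n = -1 := by
  rw [← exp_nat_mul, mul_div_cancel₀ _ (Nat.cast_ne_zero.mpr hn), exp_pi_mul_I]

theorem norm_eq_one_of_pow_succ_eq_neg_one {𝕜 : Type*} [NormedDivisionRing 𝕜] {e : 𝕜}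
    {k : ℕ} (he : e ^ (k + 1) = -1) : ‖e‖ = 1 := by
  have h : ‖e‖ ^ (k + 1) = 1 := by rw [← norm_pow, he, norm_neg, norm_one]
  exact (pow_eq_one_iff_of_nonneg (norm_nonneg e) k.succ_ne_zero).mp h

theorem mul_pow_div_mul_mul_of_pow_succ_eq_neg_one {K : Type*} [Field K] {e : K} {k : ℕ}
    (he : e ^ (k + 1) = -1) (z r δ : K) : (e * z) ^ k / r * (e * δ) = -(z ^ k / r * δ) := by
  calc (e * z) ^ k / r * (e * δ) = e ^ (k + 1) * (z ^ k / r * δ) := by ring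
    _ = -(z ^ k / r * δ) := by rw [he, neg_one_mul]

theorem stmt13_general (n : ℕ) (hn : 1 ≤ n) (ζ : ℂ) (δw δζ : ℂ) :
    (δw + Complex.I *
        (((starRingEnd ℂ) (Complex.exp (Real.pi * Complex.I / n) * ζ)) ^ (n-1) /
          (‖Complex.exp (Real.pi * Complex.I / n) * ζ‖ : ℂ) ^ (n-1)) *
        (starRingEnd ℂ) (Complex.exp (Real.pi * Complex.I / n) * δζ)
      = (starRingEnd ℂ)
          ((starRingEnd ℂ) δw +
            Complex.I * (ζ ^ (n-1) / (‖ζ‖ : ℂ) ^ (n-1)) * δζ)) ∧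
    ((starRingEnd ℂ) δw + Complex.I *
        ((Complex.exp (Real.pi * Complex.I / n) * ζ) ^ (n-1) /
          (‖Complex.exp (Real.pi * Complex.I / n) * ζ‖ : ℂ) ^ (n-1)) *
        (Complex.exp (Real.pi * Complex.I / n) * δζ)
      = (starRingEnd ℂ)
          (δw + Complex.I * (((starRingEnd ℂ) ζ) ^ (n-1) / (‖ζ‖ : ℂ) ^ (n-1)) *
            (starRingEnd ℂ) δζ)) := by
  obtain ⟨k, rfl⟩ : ∃ k, n = k + 1 := Nat.exists_eq_add_of_le' hn
  set e := exp (Real.pi * I / (k + 1 : ℕ))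
  have he : e ^ (k + 1) = -1 := exp_pi_mul_I_div_pow_self k.succ_ne_zero
  have hce : conj e ^ (k + 1) = -1 := by rw [← map_pow, he, map_neg, map_one]
  have hnorm : ‖e * ζ‖ = ‖ζ‖ := by rw [norm_mul, norm_eq_one_of_pow_succ_eq_neg_one he, one_mul]
  simp only [Nat.add_sub_cancel, hnorm, map_mul, map_add, map_div₀, map_pow, conj_conj, conj_I,
    conj_ofReal]
  constructor
  · rw [mul_assoc I, mul_pow_div_mul_mul_of_pow_succ_eq_neg_one hce]
    ring
  · rw [mul_assoc I, mul_pow_div_mul_mul_of_pow_succ_eq_neg_one he]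
    ring

/-- the map C(w,ζ) = (w, e^{iπ/n}ζ) on M₀ = ℂ × ℂ* satisfies
C*(ω₁) = conj(ω₂) and C*(ω₂) = conj(ω₁), where
ω₁ = dw + i(ζ̄^{n−1}/|ζ|^{n−1})dζ̄ and ω₂ = dw̄ + i(ζ^{n−1}/|ζ|^{n−1})dζ;
stated by evaluation on a tangent vector (δw, δζ) at (w,ζ), ζ ≠ 0, with
dC(δw,δζ) = (δw, e^{iπ/n}δζ). -/
theorem stmt13 (n : ℕ) (hn : 1 ≤ n) (w ζ : ℂ) (hζ : ζ ≠ 0) (δw δζ : ℂ) :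
    (δw + Complex.I *
        (((starRingEnd ℂ) (Complex.exp (Real.pi * Complex.I / n) * ζ)) ^ (n-1) /
          (‖Complex.exp (Real.pi * Complex.I / n) * ζ‖ : ℂ) ^ (n-1)) *
        (starRingEnd ℂ) (Complex.exp (Real.pi * Complex.I / n) * δζ)
      = (starRingEnd ℂ)
          ((starRingEnd ℂ) δw +
            Complex.I * (ζ ^ (n-1) / (‖ζ‖ : ℂ) ^ (n-1)) * δζ)) ∧
    ((starRingEnd ℂ) δw + Complex.I *
        ((Complex.exp (Real.pi * Complex.I / n) * ζ) ^ (n-1) /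
          (‖Complex.exp (Real.pi * Complex.I / n) * ζ‖ : ℂ) ^ (n-1)) *
        (Complex.exp (Real.pi * Complex.I / n) * δζ)
      = (starRingEnd ℂ)
          (δw + Complex.I * (((starRingEnd ℂ) ζ) ^ (n-1) / (‖ζ‖ : ℂ) ^ (n-1)) *
            (starRingEnd ℂ) δζ)) :=
  stmt13_general n hn ζ δw δζ
end

section
/- Fix n ≥ 1 and c ∈ ℝ. Let L = {(z, ζu) ∈ ℂ × ℂⁿ : |ζ|² = n(|z|²−1), Re(z·ζⁿ) = 0, u ∈ S^{n−1}}. At every point of L where |z| > 1 and z ≠ 0 the defining equations |ζ|² − n(|z|²−1) = 0 and Re(zζⁿ) = 0 have linearly independent differentials on the set μ⁻¹(0) parametrized by (z, ζ, u), and the corresponding surface Σ = {(z,ζ) ∈ ℂ² : |ζ|² = n(|z|²−1), Re(zζⁿ) = 0} is, at such points, an integral surface of both Ψ₁ = (i/2)(dz∧dz̄ + dζ∧dζ̄) and Ψ₂ = Im(dz ∧ d(ζⁿ)). -/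
/-!
Divide a tangent vector by the base point: `a = z A`, `b = ζ B` (possible as `z, ζ ≠ 0`).
With `P = z ζⁿ`, which is purely imaginary and nonzero on `Σ`, the two
differentials become `dg₁ = 2 (|ζ|² Re B - n |z|² Re A)` and
`dg₂ = Re (P (A + n B)) = -Im P · Im (A + n B)`, while
`Ψ₁ = |z|² Im (Ā A') + |ζ|² Im (B̄ B')` and `Ψ₂ = n Im P · Re (A B' - A' B)`.
On the kernel, `Re A` and `Im A` are fixed multiples of `Re B` and `Im B`, and both forms
cancel identically. Linear independence of `dg₁, dg₂` is seen on the vectors `(z, 0)` and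
`(conj ζⁿ, 0)`.
-/

open Complex ComplexConjugate

namespace IntegralSurface

variable (n : ℕ) (z ζ : ℂ)

def dg₁ (a b : ℂ) : ℝ := 2 * (conj ζ * b).re - 2 * n * (conj z * a).re

def dg₂ (a b : ℂ) : ℝ := (ζ ^ n * a).re + ((n : ℂ) * z * ζ ^ (n - 1) * b).re

-- `Ψ₁` and `Ψ₂` evaluated on the tangent vectors `(a, b)` and `(a', b')` of `ℂ²`.
def Ψ₁ (a b a' b' : ℂ) : ℝ := (conj a * a').im + (conj b * b').im

def Ψ₂ (a b a' b' : ℂ) : ℝ := ((n : ℂ) * ζ ^ (n - 1) * (a * b' - a' * b)).im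

variable {n z ζ}

lemma conj_mul_mul_self (u w : ℂ) : conj u * (u * w) = (normSq u : ℂ) * w := by
  rw [normSq_eq_conj_mul_self]
  ring

lemma conj_mul_mul_mul (u v w : ℂ) :
    conj (u * v) * (u * w) = (normSq u : ℂ) * (conj v * w) := by
  rw [normSq_eq_conj_mul_self, map_mul]
  ring

lemma re_mul_of_re_eq_zero {P : ℂ} (hP : P.re = 0) (w : ℂ) : (P * w).re = -(P.im * w.im) := by
  simp [mul_re, hP]

lemma im_mul_of_re_eq_zero {P : ℂ} (hP : P.re = 0) (w : ℂ) : (P * w).im = P.im * w.re := by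
  simp [mul_im, hP]

lemma dg₁_mul_mul (A B : ℂ) :
    dg₁ n z ζ (z * A) (ζ * B) = 2 * (normSq ζ * B.re - n * (normSq z * A.re)) := by
  rw [dg₁, conj_mul_mul_self, conj_mul_mul_self, re_ofReal_mul, re_ofReal_mul]
  ring

lemma dg₂_mul_mul (hn : n ≠ 0) (A B : ℂ) :
    dg₂ n z ζ (z * A) (ζ * B) = (z * ζ ^ n * (A + n * B)).re := by
  rw [dg₂, ← add_re, ← pow_sub_one_mul hn ζ]
  ring_nf

lemma Ψ₁_mul_mul (A B A' B' : ℂ) :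
    Ψ₁ (z * A) (ζ * B) (z * A') (ζ * B') =
      normSq z * (conj A * A').im + normSq ζ * (conj B * B').im := by
  simp only [Ψ₁, conj_mul_mul_mul, im_ofReal_mul]

lemma Ψ₂_mul_mul (hn : n ≠ 0) (A B A' B' : ℂ) :
    Ψ₂ n ζ (z * A) (ζ * B) (z * A') (ζ * B') = (n * (z * ζ ^ n) * (A * B' - A' * B)).im := by
  rw [Ψ₂, ← pow_sub_one_mul hn ζ]
  ring_nf

lemma forms_eq_zero_of_kernel {x y m : ℝ} {A B A' B' : ℂ}
    (h₁ : y * B.re = m * (x * A.re)) (h₁' : y * B'.re = m * (x * A'.re))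
    (h₂ : A.im + m * B.im = 0) (h₂' : A'.im + m * B'.im = 0) :
    x * (conj A * A').im + y * (conj B * B').im = 0 ∧ m * x * (A * B' - A' * B).re = 0 := by
  simp only [mul_im, mul_re, conj_re, conj_im, sub_re]
  constructor
  · linear_combination B'.im * h₁ - B.im * h₁' + x * A.re * h₂' - x * A'.re * h₂
  · linear_combination (-B'.re) * h₁ + B.re * h₁' - m * x * B'.im * h₂ + m * x * B.im * h₂'

theorem Ψ_eq_zero_of_dg_eq_zero (hn : n ≠ 0) (hz : z ≠ 0) (hζ : ζ ≠ 0)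
    (hP : (z * ζ ^ n).re = 0) {a b a' b' : ℂ}
    (h₁ : dg₁ n z ζ a b = 0) (h₁' : dg₁ n z ζ a' b' = 0)
    (h₂ : dg₂ n z ζ a b = 0) (h₂' : dg₂ n z ζ a' b' = 0) :
    Ψ₁ a b a' b' = 0 ∧ Ψ₂ n ζ a b a' b' = 0 := by
  have hPim : (z * ζ ^ n).im ≠ 0 := fun h ↦ mul_ne_zero hz (pow_ne_zero n hζ) (ext hP h)
  obtain ⟨A, rfl⟩ : ∃ A, a = z * A := ⟨a / z, (mul_div_cancel₀ a hz).symm⟩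
  obtain ⟨B, rfl⟩ : ∃ B, b = ζ * B := ⟨b / ζ, (mul_div_cancel₀ b hζ).symm⟩
  obtain ⟨A', rfl⟩ : ∃ A', a' = z * A' := ⟨a' / z, (mul_div_cancel₀ a' hz).symm⟩
  obtain ⟨B', rfl⟩ : ∃ B', b' = ζ * B' := ⟨b' / ζ, (mul_div_cancel₀ b' hζ).symm⟩
  rw [dg₁_mul_mul] at h₁ h₁'
  rw [dg₂_mul_mul hn, re_mul_of_re_eq_zero hP] at h₂ h₂'
  simp only [neg_eq_zero, mul_eq_zero, hPim, false_or, add_im, ← ofReal_natCast,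
    im_ofReal_mul] at h₂ h₂'
  obtain ⟨hΨ₁, hΨ₂⟩ := forms_eq_zero_of_kernel (x := normSq z) (y := normSq ζ) (m := n)
    (by linarith) (by linarith) h₂ h₂'
  have hnz : (n : ℝ) * normSq z ≠ 0 :=
    mul_ne_zero (Nat.cast_ne_zero.mpr hn) (normSq_pos.mpr hz).ne'
  refine ⟨by rw [Ψ₁_mul_mul, hΨ₁], ?_⟩
  rw [Ψ₂_mul_mul hn, ← ofReal_natCast, mul_assoc, im_ofReal_mul, im_mul_of_re_eq_zero hP,
    (mul_eq_zero.mp hΨ₂).resolve_left hnz, mul_zero, mul_zero]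

theorem dg_linearIndependent (hn : n ≠ 0) (hz : z ≠ 0) (hζ : ζ ≠ 0)
    (hP : (z * ζ ^ n).re = 0) {s t : ℝ}
    (h : ∀ a b, s * dg₁ n z ζ a b + t * dg₂ n z ζ a b = 0) : s = 0 ∧ t = 0 := by
  have hs : s = 0 := by
    have := h (z * 1) (ζ * 0)
    rw [dg₁_mul_mul, dg₂_mul_mul hn] at this
    simpa [hP, hn, hz] using this
  subst hs
  have := h (conj (ζ ^ n)) 0
  simp only [dg₂, mul_conj, ofReal_re, mul_zero, zero_re, add_zero, zero_mul, zero_add,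
    mul_eq_zero, normSq_eq_zero, pow_eq_zero_iff hn, hζ, or_false] at this
  exact ⟨rfl, this⟩

end IntegralSurface

theorem stmt15_general (n : ℕ) (hn : 1 ≤ n) (z ζ : ℂ)
    (h1 : ‖ζ‖ ^ 2 = n * (‖z‖ ^ 2 - 1))
    (h2 : (z * ζ ^ n).re = 0) (hz : 1 < ‖z‖) (hz0 : z ≠ 0) :
    (∀ s t : ℝ,
      (∀ a b : ℂ,
        s * (2 * ((starRingEnd ℂ) ζ * b).re - 2 * n * ((starRingEnd ℂ) z * a).re) +
          t * ((ζ ^ n * a).re + ((n : ℂ) * z * ζ ^ (n-1) * b).re) = 0) →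
      s = 0 ∧ t = 0) ∧
    (∀ a b a' b' : ℂ,
      2 * ((starRingEnd ℂ) ζ * b).re - 2 * n * ((starRingEnd ℂ) z * a).re = 0 →
      2 * ((starRingEnd ℂ) ζ * b').re - 2 * n * ((starRingEnd ℂ) z * a').re = 0 →
      (ζ ^ n * a).re + ((n : ℂ) * z * ζ ^ (n-1) * b).re = 0 →
      (ζ ^ n * a').re + ((n : ℂ) * z * ζ ^ (n-1) * b').re = 0 →
      ((starRingEnd ℂ) a * a').im + ((starRingEnd ℂ) b * b').im = 0 ∧
      (((n : ℂ) * ζ ^ (n-1) * (a * b' - a' * b)).im = 0)) := by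
  have hζ : ζ ≠ 0 := by
    rintro rfl
    have : (0 : ℝ) < n * (‖z‖ ^ 2 - 1) := mul_pos (by exact_mod_cast hn) (by nlinarith)
    simp [← h1] at this
  have hn0 : n ≠ 0 := Nat.one_le_iff_ne_zero.mp hn
  exact ⟨fun s t ↦ IntegralSurface.dg_linearIndependent hn0 hz0 hζ h2,
    fun a b a' b' ↦ IntegralSurface.Ψ_eq_zero_of_dg_eq_zero hn0 hz0 hζ h2⟩

/-- on L = {(z,ζu) : |ζ|² = n(|z|²−1), Re(zζⁿ) = 0, u ∈ S^{n−1}},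
at points with |z| > 1 and z ≠ 0, the differentials of g₁ = |ζ|² − n(|z|²−1) and
g₂ = Re(zζⁿ) (acting on a tangent vector (a,b) of ℂ² as
dg₁(a,b) = 2Re(ζ̄b) − 2nRe(z̄a), dg₂(a,b) = Re(ζⁿa) + Re(nzζ^{n−1}b)) are
linearly independent, and Ψ₁ = (i/2)(dz∧dz̄ + dζ∧dζ̄) and Ψ₂ = Im(dz∧d(ζⁿ))
vanish on ker dg₁ ∩ ker dg₂, i.e. Σ is an integral surface of Ψ₁ and Ψ₂. -/
theorem stmt15 (n : ℕ) (hn : 1 ≤ n) (c : ℝ) (z ζ : ℂ)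
    (h1 : ‖ζ‖ ^ 2 = n * (‖z‖ ^ 2 - 1))
    (h2 : (z * ζ ^ n).re = 0) (hz : 1 < ‖z‖) (hz0 : z ≠ 0) :
    (∀ s t : ℝ,
      (∀ a b : ℂ,
        s * (2 * ((starRingEnd ℂ) ζ * b).re - 2 * n * ((starRingEnd ℂ) z * a).re) +
          t * ((ζ ^ n * a).re + ((n : ℂ) * z * ζ ^ (n-1) * b).re) = 0) →
      s = 0 ∧ t = 0) ∧
    (∀ a b a' b' : ℂ,
      2 * ((starRingEnd ℂ) ζ * b).re - 2 * n * ((starRingEnd ℂ) z * a).re = 0 →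
      2 * ((starRingEnd ℂ) ζ * b').re - 2 * n * ((starRingEnd ℂ) z * a').re = 0 →
      (ζ ^ n * a).re + ((n : ℂ) * z * ζ ^ (n-1) * b).re = 0 →
      (ζ ^ n * a').re + ((n : ℂ) * z * ζ ^ (n-1) * b').re = 0 →
      ((starRingEnd ℂ) a * a').im + ((starRingEnd ℂ) b * b').im = 0 ∧
      (((n : ℂ) * ζ ^ (n-1) * (a * b' - a' * b)).im = 0)) :=
  stmt15_general n hn z ζ h1 h2 hz hz0
end
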